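/- arXiv:math/0312405 — 5 statements merged into one kernel-verified Lean document; each statement's English description precedes it below -/
import Mathlib

section
/- Let R be a commutative ring with a regular sequence α, β. If α generates a prime ideal in the localization R[β⁻¹], then α generates a prime ideal in R. -/
/-- Let `α, β` be a regular sequence in a commutative ring `R`.  If `α`
generates a prime ideal in the localization `R[β⁻¹]`, then `α` generates a
prime ideal in `R`. -/
theorem stmt2 (R : Type*) [CommRing R] (α β : R)
    (hα : α ∈ nonZeroDivisors R)
    (hβ : Ideal.Quotient.mk (Ideal.span {α}) β ∈
      nonZeroDivisors (R ⧸ Ideal.span {α}))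
    (hprime : (Ideal.span {algebraMap R (Localization.Away β) α}).IsPrime) :
    (Ideal.span {α}).IsPrime := by
  set S := Localization.Away β
  set f := algebraMap R S
  have hmap : Ideal.span {f α} = Ideal.map f (Ideal.span {α}) := by
    rw [Ideal.map_span, Set.image_singleton]
  have key : Ideal.comap f (Ideal.span {f α}) = Ideal.span {α} := by
    apply le_antisymm
    · intro x hx
      rw [Ideal.mem_comap, hmap] at hx
      -- f x = mk' x 1
      have hx' : IsLocalization.mk' S x (1 : Submonoid.powers β) ∈
          (Ideal.span {α}).map f := by
        rwa [IsLocalization.mk'_one]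
      obtain ⟨s, hs, hsx⟩ := (IsLocalization.mk'_mem_map_algebraMap_iff
        (Submonoid.powers β) S (Ideal.span {α}) x 1).mp hx'
      obtain ⟨n, rfl⟩ := hs
      -- β^n * x ∈ span α; use that β is nzd mod α
      have h0 : (Ideal.Quotient.mk (Ideal.span {α}) (β ^ n * x)) = 0 :=
        (Ideal.Quotient.eq_zero_iff_mem).mpr hsx
      have hβn : (Ideal.Quotient.mk (Ideal.span {α}) β) ^ n ∈
          nonZeroDivisors (R ⧸ Ideal.span {α}) := pow_mem hβ n
      rw [map_mul, map_pow] at h0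
      have : (Ideal.Quotient.mk (Ideal.span {α}) x) = 0 := by
        exact (mul_left_mem_nonZeroDivisors_eq_zero_iff hβn).mp h0
      exact Ideal.Quotient.eq_zero_iff_mem.mp this
    · exact fun x hx => Ideal.mem_comap.mpr (hmap ▸ Ideal.mem_map_of_mem f hx)
  exact key ▸ Ideal.IsPrime.comap f (hK := hprime)
end

section
/- Let 𝔖 be a finite nonempty subset of V* of size d, where V* is the dual of a finite-dimensional F₂-vector space, and let S = S(V*) be the symmetric algebra. Write ∏_{x∈𝔖}(X + x) = f₀X^d + f₁X^{d-1} + ⋯ + f_d in S[X]. Then for each 0 ≤ i ≤ d, Sq^i(f_d) = f_d · f_i, where Sq^i is the Steenrod square acting on S. -/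
open MvPolynomial Polynomial

section Aux

variable {σ : Type*}
  (Sq : ℕ → MvPolynomial σ (ZMod 2) → MvPolynomial σ (ZMod 2))

theorem sq_one_aux
    (h0 : ∀ s, Sq 0 s = s)
    (hcartan : ∀ n s t, Sq n (s * t) =
      ∑ i ∈ Finset.range (n + 1), Sq i s * Sq (n - i) t) :
    ∀ n, 1 ≤ n → Sq n 1 = 0 := by
  intro n
  induction n using Nat.strong_induction_on with
  | _ n ih =>
    intro hn
    have h := hcartan n 1 1
    rw [one_mul] at h
    have hsub : ∑ i ∈ Finset.range (n + 1), Sq i 1 * Sq (n - i) 1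
        = ∑ i ∈ ({0, n} : Finset ℕ), Sq i 1 * Sq (n - i) 1 := by
      refine (Finset.sum_subset ?_ ?_).symm
      · intro j hj
        simp only [Finset.mem_insert, Finset.mem_singleton] at hj
        rcases hj with rfl | rfl
        · simp
        · simp [Finset.mem_range]
      · intro j hj hj'
        simp only [Finset.mem_insert, Finset.mem_singleton, not_or] at hj'
        have h1 : 1 ≤ j := Nat.one_le_iff_ne_zero.mpr hj'.1
        have h2 : j < n := lt_of_le_of_ne (Nat.lt_succ_iff.mp (Finset.mem_range.mp hj)) hj'.2
        rw [ih j h2 h1, zero_mul]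
    have hne : (0 : ℕ) ≠ n := fun h => by omega
    rw [hsub, Finset.sum_pair hne, Nat.sub_zero, Nat.sub_self, h0] at h
    have h2 : Sq n 1 + Sq n 1 = 0 := CharTwo.add_self_eq_zero _
    rw [one_mul, mul_one, h2] at h
    exact h

theorem key_aux
    (hadd : ∀ n s t, Sq n (s + t) = Sq n s + Sq n t)
    (h0 : ∀ s, Sq 0 s = s)
    (hlin1 : ∀ x ∈ Submodule.span (ZMod 2)
      (Set.range (MvPolynomial.X : σ → MvPolynomial σ (ZMod 2))),
      Sq 1 x = x ^ 2)
    (hlinhigh : ∀ x ∈ Submodule.span (ZMod 2)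
      (Set.range (MvPolynomial.X : σ → MvPolynomial σ (ZMod 2))),
      ∀ n, 2 ≤ n → Sq n x = 0)
    (hcartan : ∀ n s t, Sq n (s * t) =
      ∑ i ∈ Finset.range (n + 1), Sq i s * Sq (n - i) t) :
    ∀ s : Finset (MvPolynomial σ (ZMod 2)),
      (∀ x ∈ s, x ∈ Submodule.span (ZMod 2)
        (Set.range (MvPolynomial.X : σ → MvPolynomial σ (ZMod 2)))) →
      (∀ i ≤ s.card,
        Sq i ((∏ x ∈ s, (Polynomial.X + Polynomial.C x)).coeff 0) =
          (∏ x ∈ s, (Polynomial.X + Polynomial.C x)).coeff 0 *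
            (∏ x ∈ s, (Polynomial.X + Polynomial.C x)).coeff (s.card - i)) ∧
      (∀ i, s.card < i →
        Sq i ((∏ x ∈ s, (Polynomial.X + Polynomial.C x)).coeff 0) = 0) := by
  classical
  intro s
  induction s using Finset.induction_on with
  | empty =>
    intro _
    constructor
    · intro i hi
      have hi0 : i = 0 := by simpa using hi
      subst hi0
      simp [h0]
    · intro i hi
      simpa using sq_one_aux Sq h0 hcartan i hi
  | @insert y s hy ih =>
    intro hlin
    have hymem : y ∈ Submodule.span (ZMod 2)
        (Set.range (MvPolynomial.X : σ → MvPolynomial σ (ZMod 2))) :=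
      hlin y (Finset.mem_insert_self y s)
    have hlin' : ∀ x ∈ s, x ∈ Submodule.span (ZMod 2)
        (Set.range (MvPolynomial.X : σ → MvPolynomial σ (ZMod 2))) :=
      fun x hx => hlin x (Finset.mem_insert_of_mem hx)
    obtain ⟨ih1, ih2⟩ := ih hlin'
    set P : Polynomial (MvPolynomial σ (ZMod 2)) :=
      ∏ x ∈ s, (Polynomial.X + Polynomial.C x) with hP
    have hprod : ∏ x ∈ insert y s, (Polynomial.X + Polynomial.C x)
        = (Polynomial.X + Polynomial.C y) * P := Finset.prod_insert hy
    have hcard : (insert y s).card = s.card + 1 := Finset.card_insert_of_notMem hy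
    -- coefficient facts
    have hc0 : ((Polynomial.X + Polynomial.C y) * P).coeff 0 = y * P.coeff 0 := by
      simp [Polynomial.coeff_zero_eq_eval_zero]
    have hck : ∀ k, ((Polynomial.X + Polynomial.C y) * P).coeff (k + 1)
        = P.coeff k + y * P.coeff (k + 1) := by
      intro k
      rw [add_mul, Polynomial.coeff_add, Polynomial.coeff_X_mul, Polynomial.coeff_C_mul]
    -- Cartan with a linear factor
    have hsq : ∀ i, 1 ≤ i → ∀ t, Sq i (y * t)
        = y * Sq i t + y ^ 2 * Sq (i - 1) t := by
      intro i hi t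
      rw [hcartan]
      have hsub : ∑ j ∈ Finset.range (i + 1), Sq j y * Sq (i - j) t
          = ∑ j ∈ ({0, 1} : Finset ℕ), Sq j y * Sq (i - j) t := by
        refine (Finset.sum_subset ?_ ?_).symm
        · intro j hj
          simp only [Finset.mem_insert, Finset.mem_singleton] at hj
          rcases hj with rfl | rfl <;> simp [Finset.mem_range] <;> omega
        · intro j hj hj'
          simp only [Finset.mem_insert, Finset.mem_singleton, not_or] at hj'
          have : 2 ≤ j := by omega
          rw [hlinhigh y hymem j this, zero_mul]
      rw [hsub, Finset.sum_pair (by norm_num : (0:ℕ) ≠ 1), h0, hlin1 y hymem,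
        Nat.sub_zero]
    rw [hprod, hcard, hc0]
    constructor
    · intro i hi
      rcases Nat.eq_zero_or_pos i with rfl | hipos
      · -- i = 0
        have hmonic : ((Polynomial.X + Polynomial.C y) * P).Monic := by
          rw [← hprod]
          exact Polynomial.monic_prod_of_monic _ _
            (fun x _ => Polynomial.monic_X_add_C x)
        have hdeg : ((Polynomial.X + Polynomial.C y) * P).natDegree = s.card + 1 := by
          rw [← hprod, Polynomial.natDegree_prod_of_monic _ _
            (fun x _ => Polynomial.monic_X_add_C x)]
          simp [Polynomial.natDegree_X_add_C, hcard]
        rw [h0, Nat.sub_zero, ← hdeg, hmonic.coeff_natDegree, mul_one]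
      · rcases Nat.lt_or_ge i (s.card + 1) with hlt | hge
        · -- 1 ≤ i ≤ s.card
          have hi' : i ≤ s.card := by omega
          have e1 : s.card + 1 - i = (s.card - i) + 1 := by omega
          have e2 : s.card - (i - 1) = s.card - i + 1 := by omega
          rw [hsq i hipos, ih1 i hi', ih1 (i - 1) (by omega), e1, hck, e2]
          ring
        · -- i = s.card + 1
          have hieq : i = s.card + 1 := by omega
          subst hieq
          rw [hsq _ (by omega), ih2 (s.card + 1) (by omega), Nat.add_sub_cancel,
            ih1 s.card le_rfl, Nat.sub_self, Nat.sub_self, hc0]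
          ring
    · intro i hi
      rw [hsq i (by omega), ih2 i (by omega), ih2 (i - 1) (by omega)]
      ring

end Aux

/-- Wu formula for Chern (Stiefel–Whitney) polynomials: if `Sq` is a family of
additive operations on `S = F₂[x_i]` satisfying the defining properties of the
Steenrod squares, `𝔖` is a nonempty finite set of `d` linear forms, and
`∏_{x ∈ 𝔖}(X + x) = f₀X^d + f₁X^{d-1} + ⋯ + f_d`, then
`Sq^i(f_d) = f_d * f_i` for `0 ≤ i ≤ d`. -/
theorem stmt9 (σ : Type*)
    (Sq : ℕ → MvPolynomial σ (ZMod 2) → MvPolynomial σ (ZMod 2))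
    (hadd : ∀ n s t, Sq n (s + t) = Sq n s + Sq n t)
    (h0 : ∀ s, Sq 0 s = s)
    (hlin1 : ∀ x ∈ Submodule.span (ZMod 2)
      (Set.range (MvPolynomial.X : σ → MvPolynomial σ (ZMod 2))),
      Sq 1 x = x ^ 2)
    (hlinhigh : ∀ x ∈ Submodule.span (ZMod 2)
      (Set.range (MvPolynomial.X : σ → MvPolynomial σ (ZMod 2))),
      ∀ n, 2 ≤ n → Sq n x = 0)
    (hcartan : ∀ n s t, Sq n (s * t) =
      ∑ i ∈ Finset.range (n + 1), Sq i s * Sq (n - i) t)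
    (𝔖 : Finset (MvPolynomial σ (ZMod 2))) (hne : 𝔖.Nonempty)
    (hlin : ∀ x ∈ 𝔖, x ∈ Submodule.span (ZMod 2)
      (Set.range (MvPolynomial.X : σ → MvPolynomial σ (ZMod 2)))) :
    ∀ i ≤ 𝔖.card,
      Sq i ((∏ x ∈ 𝔖, (Polynomial.X + Polynomial.C x)).coeff 0) =
        (∏ x ∈ 𝔖, (Polynomial.X + Polynomial.C x)).coeff 0 *
          (∏ x ∈ 𝔖, (Polynomial.X + Polynomial.C x)).coeff (𝔖.card - i) := by
  exact (key_aux Sq hadd h0 hlin1 hlinhigh hcartan 𝔖 hlin).1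
end

section
/- Define ξ_j = Σ_{ℓ=1}^{n} (x_{2ℓ-1}^{2^j} x_{2ℓ} + x_{2ℓ-1} x_{2ℓ}^{2^j}) in F₂[x₁,…,x_{2n}] for j ≥ 1 and ξ₀ = x₀² + Σ_{ℓ=1}^n x_{2ℓ-1}x_{2ℓ}. Then the total Steenrod operation satisfies Sq•(ξ₀) = ξ₀ + ξ₁ + ξ₀², Sq•(ξ₁) = ξ₁ + ξ₂ + ξ₁², and Sq•(ξ_i) = ξ_i + ξ_{i-1}² + ξ_{i+1} + ξ_i² for i ≥ 2. -/
open MvPolynomial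

open Finset in
lemma frob2 (p : MvPolynomial ℕ (ZMod 2)) (j : ℕ) :
    (p + p ^ 2) ^ (2 ^ j) = p ^ (2 ^ j) + (p ^ (2 ^ j)) ^ 2 := by
  rw [add_pow_char_pow, ← pow_mul, ← pow_mul, mul_comm]

lemma key (x y : MvPolynomial ℕ (ZMod 2)) (k : ℕ) :
    (x ^ 2 ^ (2 + k) + (x ^ 2 ^ (2 + k)) ^ 2) * (y + y ^ 2)
      + (x + x ^ 2) * (y ^ 2 ^ (2 + k) + (y ^ 2 ^ (2 + k)) ^ 2)
    = (x ^ 2 ^ (2 + k) * y + x * y ^ 2 ^ (2 + k))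
      + (x ^ 2 ^ (1 + k) * y + x * y ^ 2 ^ (1 + k)) ^ 2
      + (x ^ 2 ^ (3 + k) * y + x * y ^ 2 ^ (3 + k))
      + (x ^ 2 ^ (2 + k) * y + x * y ^ 2 ^ (2 + k)) ^ 2 := by
  have h2 : (2 : ℕ) ^ (2 + k) = 2 ^ (1 + k) * 2 := by ring
  have h3 : (2 : ℕ) ^ (3 + k) = 2 ^ (1 + k) * 4 := by ring
  simp only [h2, h3, pow_mul]
  simp only [CharTwo.add_sq]
  generalize x ^ 2 ^ (1 + k) = a
  generalize y ^ 2 ^ (1 + k) = b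
  ring

/-- The elements `ξ_j` of `S = F₂[x₀,x₁,…]`. -/
noncomputable def xiElt (n : ℕ) : ℕ → MvPolynomial ℕ (ZMod 2) := fun j =>
  if j = 0 then
    (X 0) ^ 2 + ∑ ℓ ∈ Finset.range n, X (2 * ℓ + 1) * X (2 * ℓ + 2)
  else
    ∑ ℓ ∈ Finset.range n,
      ((X (2 * ℓ + 1)) ^ (2 ^ j) * X (2 * ℓ + 2) +
        X (2 * ℓ + 1) * (X (2 * ℓ + 2)) ^ (2 ^ j))

/-- The total Steenrod operation `Sq•` (the ring endomorphism with
`Sq•(x) = x + x²` on each variable) satisfies `Sq•(ξ₀) = ξ₀ + ξ₁ + ξ₀²`,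
`Sq•(ξ₁) = ξ₁ + ξ₂ + ξ₁²`, and
`Sq•(ξ_i) = ξ_i + ξ_{i-1}² + ξ_{i+1} + ξ_i²` for `i ≥ 2`. -/
theorem stmt11 (n : ℕ)
    (φ : MvPolynomial ℕ (ZMod 2) →+* MvPolynomial ℕ (ZMod 2))
    (hφ : ∀ i, φ (X i) = X i + (X i) ^ 2) :
    φ (xiElt n 0) = xiElt n 0 + xiElt n 1 + (xiElt n 0) ^ 2 ∧
    φ (xiElt n 1) = xiElt n 1 + xiElt n 2 + (xiElt n 1) ^ 2 ∧
    ∀ i, 2 ≤ i →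
      φ (xiElt n i) =
        xiElt n i + (xiElt n (i - 1)) ^ 2 + xiElt n (i + 1) + (xiElt n i) ^ 2 := by
  refine ⟨?_, ?_, ?_⟩
  · simp only [xiElt, if_true, eq_self_iff_true, if_neg one_ne_zero, map_add, map_pow, map_sum,
      map_mul, hφ, sum_pow_char, CharTwo.add_sq]
    have : ∀ x y : MvPolynomial ℕ (ZMod 2),
        (x + x ^ 2) * (y + y ^ 2)
          = x * y + (x ^ 2 ^ 1 * y + x * y ^ 2 ^ 1) + (x * y) ^ 2 := by
      intro x y; ring
    rw [Finset.sum_congr rfl fun ℓ _ => this _ _]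
    simp only [Finset.sum_add_distrib]
    ring
  · simp only [xiElt, if_neg one_ne_zero, if_neg (by norm_num : ¬ (2 = 0)), map_add, map_pow,
      map_sum, map_mul, hφ, sum_pow_char]
    rw [← Finset.sum_add_distrib, ← Finset.sum_add_distrib]
    refine Finset.sum_congr rfl fun ℓ _ => ?_
    rw [frob2 (X (2 * ℓ + 1)) 1, frob2 (X (2 * ℓ + 2)) 1]
    simp only [CharTwo.add_sq]
    generalize (X (2 * ℓ + 1) : MvPolynomial ℕ (ZMod 2)) = x
    generalize (X (2 * ℓ + 2) : MvPolynomial ℕ (ZMod 2)) = y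
    have h2 : (2 : MvPolynomial ℕ (ZMod 2)) = 0 := CharTwo.two_eq_zero
    norm_num
    linear_combination (x ^ 2 * y ^ 2) * h2
  · intro i hi
    obtain ⟨k, rfl⟩ := Nat.exists_eq_add_of_le hi
    have h0 : ¬ (2 + k = 0) := by omega
    have h1 : 2 + k - 1 = 1 + k := by omega
    have h2 : 2 + k + 1 = 3 + k := by omega
    simp only [xiElt, h1, h2, if_neg h0, Nat.add_eq_zero, Nat.succ_ne_zero, false_and,
      if_false, if_neg (by omega : ¬ (1 + k = 0)), if_neg (by omega : ¬ (3 + k = 0)),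
      map_add, map_pow, map_sum, map_mul, hφ, sum_pow_char]
    rw [← Finset.sum_add_distrib, ← Finset.sum_add_distrib, ← Finset.sum_add_distrib]
    exact Finset.sum_congr rfl fun ℓ _ => by rw [frob2, frob2]; exact key _ _ k
end

section
/- Over a commutative F₂-algebra R, the determinant of any alternating matrix (symmetric with zero diagonal) is a square in R. -/
/-!
In characteristic 2 the determinant is the permanent `∑ σ, ∏ i, A (σ i) i`. For symmetric `A` the
terms of `σ` and `σ⁻¹` agree, so they cancel in pairs and only involutions survive; those with a
fixed point contribute `0` because the diagonal vanishes. A fixed-point-free involution pairs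
`i` with `σ i`, and symmetry makes its term the square of the product over `{i | i < σ i}`.
Finally, sums of squares are squares in characteristic 2.
-/

open Finset Equiv

namespace CharTwo

variable {R : Type*} [CommRing R] [CharP R 2]

theorem isSquare_add {a b : R} (ha : IsSquare a) (hb : IsSquare b) : IsSquare (a + b) := by
  obtain ⟨x, rfl⟩ := ha
  obtain ⟨y, rfl⟩ := hb
  exact ⟨x + y, by linear_combination (-(x * y)) * two_eq_zero (R := R)⟩

theorem isSquare_sum {ι : Type*} {s : Finset ι} {f : ι → R} (hf : ∀ i ∈ s, IsSquare (f i)) :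
    IsSquare (∑ i ∈ s, f i) :=
  Finset.sum_induction f IsSquare (fun _ _ => isSquare_add) IsSquare.zero hf

theorem sum_eq_sum_filter_inv_eq_self {G : Type*} [Group G] [Fintype G] [DecidableEq G]
    (f : G → R) (hf : ∀ g, f g⁻¹ = f g) :
    ∑ g, f g = ∑ g ∈ univ.filter fun g => g⁻¹ = g, f g := by
  rw [← sum_filter_add_sum_filter_not univ (fun g => g⁻¹ = g), add_eq_left]
  exact sum_involution (fun g _ => g⁻¹) (fun g _ => by rw [hf, add_self_eq_zero])
    (fun g hg _ => (mem_filter.1 hg).2) (fun g hg => by simpa [eq_comm] using hg)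
    (fun g _ => inv_inv g)

end CharTwo

namespace Matrix

variable {n R : Type*} [Fintype n] [CommRing R]

theorem prod_perm_inv_apply_of_isSymm {A : Matrix n n R} (hA : A.IsSymm) (σ : Perm n) :
    ∏ i, A (σ⁻¹ i) i = ∏ i, A (σ i) i :=
  Fintype.prod_equiv σ⁻¹ _ _ fun i => by simpa using hA.apply i (σ⁻¹ i)

theorem isSquare_prod_perm_apply_of_involutive {A : Matrix n n R} (hA : A.IsSymm) {σ : Perm n}
    (hσ : Function.Involutive σ) (hfix : ∀ i, σ i ≠ i) : IsSquare (∏ i, A (σ i) i) := by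
  classical
  let _ : LinearOrder n := LinearOrder.lift' (Fintype.equivFin n) (Fintype.equivFin n).injective
  have hlt : ∀ i, ¬ i < σ i ↔ σ i < σ (σ i) := fun i => by
    rw [hσ i, not_lt, le_iff_lt_or_eq, or_iff_left (hfix i)]
  have hswap : ∏ i ∈ univ.filter (fun i => ¬ i < σ i), A (σ i) i
      = ∏ i ∈ univ.filter (fun i => i < σ i), A (σ i) i := by
    refine prod_nbij' σ σ (fun i hi => ?_) (fun i hi => ?_) (fun i _ => hσ i) (fun i _ => hσ i)
      (fun i _ => ?_)
    · simpa [hlt] using hi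
    · simpa [hlt, hσ i] using hi
    · rw [hσ i]
      exact hA.apply _ _
  exact ⟨_, by rw [← prod_filter_mul_prod_filter_not univ (fun i => i < σ i), hswap]⟩

variable [DecidableEq n]

theorem det_eq_permanent_of_charTwo [CharP R 2] (A : Matrix n n R) : A.det = A.permanent := by
  rw [det_apply, permanent]
  refine sum_congr rfl fun σ _ => ?_
  rcases Int.units_eq_one_or (Perm.sign σ) with h | h <;> simp [h, CharTwo.neg_eq]

theorem isSquare_det_of_isSymm_of_diag_eq_zero [CharP R 2] {A : Matrix n n R} (hA : A.IsSymm)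
    (hdiag : ∀ i, A i i = 0) : IsSquare A.det := by
  rw [det_eq_permanent_of_charTwo, permanent,
    CharTwo.sum_eq_sum_filter_inv_eq_self _ (prod_perm_inv_apply_of_isSymm hA)]
  refine CharTwo.isSquare_sum fun σ hσ => ?_
  by_cases hfix : ∃ i, σ i = i
  · obtain ⟨i, hi⟩ := hfix
    rw [prod_eq_zero (mem_univ i) (by rw [hi, hdiag])]
    exact IsSquare.zero
  · have hσ : Function.Involutive σ := fun i => by
      simpa using congr($((mem_filter.1 hσ).2) (σ i)).symm
    exact isSquare_prod_perm_apply_of_involutive hA hσ (not_exists.1 hfix)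

end Matrix

/-- Over a commutative `F₂`-algebra, the determinant of any alternating matrix
(symmetric with zero diagonal) is a square. -/
theorem stmt16 (R : Type*) [CommRing R] [Algebra (ZMod 2) R] (n : ℕ)
    (A : Matrix (Fin n) (Fin n) R) (hsym : A.transpose = A)
    (hdiag : ∀ i, A i i = 0) :
    ∃ r : R, A.det = r ^ 2 := by
  rcases subsingleton_or_nontrivial R with _ | _
  · exact ⟨0, Subsingleton.elim _ _⟩
  have : CharP R 2 := charP_of_injective_algebraMap (algebraMap (ZMod 2) R).injective 2
  exact isSquare_iff_exists_sq _ |>.1 (Matrix.isSquare_det_of_isSymm_of_diag_eq_zero hsym hdiag)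
end

section
/- In S = F₂[x₁,…,x_{2n}], let ξ_j = Σ_{ℓ=1}^n (x_{2ℓ-1}^{2^j}x_{2ℓ} + x_{2ℓ-1}x_{2ℓ}^{2^j}) for j ≥ 1. Then ξ₁, …, ξ_{2n} are algebraically independent over F₂. -/
/-!
Jacobian criterion in characteristic `p`: suppose derivations `D_i` satisfy `det (D_i f_j) ≠ 0`
and `P(f) = 0` is a relation of minimal degree. By the chain rule the vector `((∂_j P)(f))_j` is
killed by the matrix `(D_i f_j)`, so every `∂_j P` is a relation of smaller degree, hence zero.
Then all exponents of `P` are divisible by `p`, so over `𝔽_p` we get `P = Q ^ p` and `Q(f) = 0`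
is a smaller relation.

For `ξ_1, …, ξ_{2n}` take `D_i` the derivative in the variable paired with `x_i`: the terms
`x^{2^j}` have zero derivative in characteristic `2`, so `D_i ξ_j = x_i^{2^j}` and the Jacobian
is the Moore matrix `(x_i^{2^j})`, whose determinant is nonzero.
-/

open MvPolynomial

/-- The symplectic invariants
`ξ_j = Σ_{ℓ=1}^n (x_{2ℓ-1}^{2^j} x_{2ℓ} + x_{2ℓ-1} x_{2ℓ}^{2^j})`
in `F₂[x₁,…,x_{2n}]` (variables indexed `1,…,2n`). -/
noncomputable def xiSymp (n : ℕ) : ℕ → MvPolynomial ℕ (ZMod 2) := fun j =>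
  ∑ ℓ ∈ Finset.range n,
    ((X (2 * ℓ + 1)) ^ (2 ^ j) * X (2 * ℓ + 2) +
      X (2 * ℓ + 1) * (X (2 * ℓ + 2)) ^ (2 ^ j))

namespace MvPolynomial

variable {R σ ι : Type*}

theorem prod_X_pow_eq_monomial_equivFunOnFinite [CommSemiring R] [Fintype ι] (c : ι → ℕ) :
    ∏ i, (X i : MvPolynomial ι R) ^ c i = monomial (Finsupp.equivFunOnFinite.symm c) 1 := by
  rw [monomial_eq, C_1, one_mul, Finsupp.prod_fintype _ _ fun _ => pow_zero _]
  rfl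

-- The diagonal monomial `∏ X_i ^ a_i` comes only from the identity permutation.
theorem det_X_pow_ne_zero [CommRing R] [Nontrivial R] [Fintype ι] [DecidableEq ι] {a : ι → ℕ}
    (ha : Function.Injective a) :
    (Matrix.of fun i j => (X i : MvPolynomial ι R) ^ a j).det ≠ 0 := by
  have hterm (σ : Equiv.Perm ι) : ∏ i, (X (σ i) : MvPolynomial ι R) ^ a i =
      monomial (Finsupp.equivFunOnFinite.symm (a ∘ σ.symm)) 1 := by
    rw [← prod_X_pow_eq_monomial_equivFunOnFinite,
      ← Equiv.prod_comp σ fun i => X i ^ (a ∘ σ.symm) i]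
    simp
  intro h
  have hcoeff := congrArg (coeff (Finsupp.equivFunOnFinite.symm a)) h
  rw [Matrix.det_apply, coeff_sum, Finset.sum_eq_single 1] at hcoeff
  · simp [prod_X_pow_eq_monomial_equivFunOnFinite, coeff_monomial] at hcoeff
  · intro σ _ hσ
    simp only [Matrix.of_apply, hterm, coeff_smul, coeff_monomial]
    rw [if_neg, smul_zero]
    intro heq
    have hfix : a ∘ σ.symm = a := Finsupp.equivFunOnFinite.symm.injective heq
    exact hσ (Equiv.ext fun i => by simpa using (ha (congrFun hfix (σ i))).symm)
  · simp

theorem det_X_comp_pow_ne_zero [CommRing R] [Nontrivial R] [Fintype ι] [DecidableEq ι]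
    {v : ι → σ} (hv : Function.Injective v) {a : ι → ℕ} (ha : Function.Injective a) :
    (Matrix.of fun i j => (X (v i) : MvPolynomial σ R) ^ a j).det ≠ 0 := by
  have hrename : (Matrix.of fun i j => (X (v i) : MvPolynomial σ R) ^ a j) =
      (rename v : MvPolynomial ι R →ₐ[R] _).toRingHom.mapMatrix
        (Matrix.of fun i j => X i ^ a j) := by
    ext i j
    simp
  rw [hrename, ← RingHom.map_det]
  exact (map_ne_zero_iff _ (rename_injective v hv)).mpr (det_X_pow_ne_zero ha)

theorem totalDegree_pderiv_le [CommSemiring R] (i : σ) (P : MvPolynomial σ R) :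
    (pderiv i P).totalDegree ≤ P.totalDegree - 1 := by
  refine Finset.sup_le fun m hm => ?_
  rw [mem_support_iff, coeff_pderiv] at hm
  have := le_totalDegree (mem_support_iff.mpr (left_ne_zero_of_mul hm))
  rw [Finsupp.sum_add_index' (fun _ => rfl) (fun _ _ _ => rfl),
    Finsupp.sum_single_index rfl] at this
  omega

theorem dvd_of_mem_support_of_pderiv_eq_zero [CommSemiring R] [NoZeroDivisors R] (p : ℕ)
    [CharP R p] {i : σ} {P : MvPolynomial σ R} (h : pderiv i P = 0) {d : σ →₀ ℕ}
    (hd : d ∈ P.support) : p ∣ d i := by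
  rcases (d i).eq_zero_or_pos with hdi | hdi
  · simp [hdi]
  have hsplit : d - Finsupp.single i 1 + Finsupp.single i 1 = d :=
    tsub_add_cancel_of_le (Finsupp.single_le_iff.mpr hdi)
  have hcoeff := coeff_pderiv (i := i) P (d - Finsupp.single i 1)
  rw [h, coeff_zero, hsplit, eq_comm, mul_eq_zero] at hcoeff
  obtain ⟨k, hk⟩ := Nat.exists_eq_add_one.mpr hdi
  rw [← CharP.cast_eq_zero_iff R p, hk]
  simpa [hk] using hcoeff.resolve_left (mem_support_iff.mp hd)

theorem exists_expand_eq_of_forall_dvd [CommSemiring R] {p : ℕ} {P : MvPolynomial σ R}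
    (h : ∀ d ∈ P.support, ∀ i, p ∣ d i) : ∃ Q, expand p Q = P := by
  refine ⟨∑ d ∈ P.support,
    monomial (Finsupp.mapRange (· / p) (Nat.zero_div p) d) (coeff d P), ?_⟩
  conv_rhs => rw [← P.support_sum_monomial_coeff]
  simp only [map_sum, expand_monomial]
  refine Finset.sum_congr rfl fun d hd => ?_
  rw [show p • Finsupp.mapRange _ _ d = d from
    Finsupp.ext fun i => by simp [Nat.mul_div_cancel' (h d hd i)]]

end MvPolynomial

theorem Derivation.map_aeval_eq_sum_pderiv {R A τ : Type*} [CommSemiring R] [CommSemiring A]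
    [Algebra R A] [Fintype τ] [DecidableEq τ] (D : Derivation R A A) (f : τ → A)
    (P : MvPolynomial τ R) :
    D (aeval f P) = ∑ j, aeval f (pderiv j P) * D (f j) := by
  induction P using MvPolynomial.induction_on with
  | C a => simp
  | add P Q hP hQ => simp only [map_add, hP, hQ, add_mul, Finset.sum_add_distrib]
  | mul_X P k hP =>
    simp only [map_mul, aeval_X, Derivation.leibniz, smul_eq_mul, hP, pderiv_X,
      map_add, add_mul, Finset.sum_add_distrib, Finset.mul_sum, Pi.single_apply]
    simp [mul_assoc]

section JacobianCriterion

variable {R A τ : Type*} [Fintype τ] [DecidableEq τ]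

theorem aeval_pderiv_eq_zero_of_det_ne_zero [CommSemiring R] [CommRing A] [NoZeroDivisors A]
    [Algebra R A] {f : τ → A} {D : τ → Derivation R A A}
    (hD : (Matrix.of fun i j => D i (f j)).det ≠ 0) {P : MvPolynomial τ R} (hP : aeval f P = 0)
    (j : τ) : aeval f (pderiv j P) = 0 := by
  refine congrFun (Matrix.eq_zero_of_mulVec_eq_zero (v := fun j => aeval f (pderiv j P)) hD
    (funext fun i => ?_)) j
  have hchain := (D i).map_aeval_eq_sum_pderiv f P
  rw [hP, map_zero] at hchain
  simpa [Matrix.mulVec, dotProduct, mul_comm] using hchain.symm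

theorem algebraicIndependent_of_det_derivation_ne_zero {p : ℕ} [hp : Fact p.Prime] [CommRing A]
    [IsDomain A] [Algebra (ZMod p) A] {f : τ → A} {D : τ → Derivation (ZMod p) A A}
    (hD : (Matrix.of fun i j => D i (f j)).det ≠ 0) : AlgebraicIndependent (ZMod p) f := by
  rw [algebraicIndependent_iff]
  intro P hP
  induction hdeg : P.totalDegree using Nat.strong_induction_on generalizing P with
  | _ m ih =>
  rcases m.eq_zero_or_pos with rfl | hm
  · rw [totalDegree_eq_zero_iff_eq_C.mp hdeg] at hP ⊢
    rw [aeval_C, map_eq_zero_iff _ (algebraMap (ZMod p) A).injective] at hP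
    rw [hP, map_zero]
  have hder (j : τ) : pderiv j P = 0 :=
    ih _ ((totalDegree_pderiv_le j P).trans_lt (by omega)) _
      (aeval_pderiv_eq_zero_of_det_ne_zero hD hP j) rfl
  obtain ⟨Q, rfl⟩ := exists_expand_eq_of_forall_dvd fun d hd i =>
    dvd_of_mem_support_of_pderiv_eq_zero p (hder i) hd
  rw [totalDegree_expand] at hdeg
  rw [expand_zmod, map_pow, pow_eq_zero_iff hp.out.ne_zero] at hP
  have hQ : Q.totalDegree < m :=
    hdeg ▸ lt_mul_of_one_lt_right (Nat.pos_of_mul_pos_right (hdeg ▸ hm)) hp.out.one_lt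
  rw [ih _ hQ Q hP rfl, map_zero]

end JacobianCriterion

-- The index of the variable paired with `x_{i+1}` in the summands of `xiSymp`.
def symplecticPartner (i : ℕ) : ℕ := if Even i then i + 2 else i

theorem pderiv_symplecticPartner_xiSymp {n i j : ℕ} (hi : i < 2 * n) (hj : j ≠ 0) :
    pderiv (symplecticPartner i) (xiSymp n j) = X (i + 1) ^ 2 ^ j := by
  have hq : ((2 ^ j : ℕ) : MvPolynomial ℕ (ZMod 2)) = 0 :=
    (CharP.cast_eq_zero_iff _ 2 _).mpr (dvd_pow_self 2 hj)
  have hterm (a b k : ℕ) :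
      pderiv k ((X a : MvPolynomial ℕ (ZMod 2)) ^ 2 ^ j * X b + X a * X b ^ 2 ^ j) =
        (if k = b then X a ^ 2 ^ j else 0) + (if k = a then X b ^ 2 ^ j else 0) := by
    simp [hq, Pi.single_apply, eq_comm]
  obtain ⟨ℓ, rfl | rfl⟩ := Nat.even_or_odd' i
  all_goals
    rw [xiSymp, map_sum, Finset.sum_eq_single ℓ
      (fun ℓ' _ h => by simp [hterm, symplecticPartner, Ne.symm h]; omega) (by simp; omega)]
    simp [hterm, symplecticPartner]

/-- The elements `ξ₁, …, ξ_{2n}` are algebraically independent over `F₂`. -/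
theorem stmt18 (n : ℕ) :
    AlgebraicIndependent (ZMod 2) (fun j : Fin (2 * n) => xiSymp n (j.val + 1)) := by
  refine algebraicIndependent_of_det_derivation_ne_zero
    (D := fun i : Fin (2 * n) => pderiv (symplecticPartner i)) ?_
  have hJ : (Matrix.of fun i j : Fin (2 * n) =>
        pderiv (symplecticPartner i) (xiSymp n (j.val + 1))) =
      Matrix.of fun i j => X (i.val + 1) ^ 2 ^ (j.val + 1) :=
    Matrix.ext fun i j => pderiv_symplecticPartner_xiSymp i.isLt j.val.succ_ne_zero
  rw [hJ]
  exact det_X_comp_pow_ne_zero (fun _ _ h => Fin.ext (by simpa using h))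
    (fun _ _ h => Fin.ext (by simpa using Nat.pow_right_injective le_rfl h))
end
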